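/- Let (A,d) be a bounded metric space with a dyadic decomposition 𝒟 (constants A₀, B₀, C₀, n₀). For every A' > 10 and every nonempty open set U ⊊ A there exist a constant B' ≥ 1, depending only on A' and the decomposition constants, and a subcollection 𝒲 ⊆ 𝒟 such that: (a) U = ⋃_{Q ∈ 𝒲} Q; (b) every Q ∈ 𝒲 satisfies diam(Q) ≤ (1/(A'−1))·dist(Q, A∖U) and dist(Q, A∖U) ≤ B'·diam(Q); (c) every Q ∈ 𝒲 contains a point that belongs to no other member of 𝒲. -/

import Mathlib

open Metric MeasureTheory Set ENNReal

noncomputable section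

/-- The `t`-Hausdorff content of a set `E` in a metric space:
the infimum of `∑ diam(E_i)^t` over countable covers of `E`. -/
noncomputable def hContent {A : Type*} [MetricSpace A] (t : ℝ) (E : Set A) : ℝ≥0∞ :=
  ⨅ (c : ℕ → Set A) (_ : E ⊆ ⋃ n, c n), ∑' n, EMetric.diam (c n) ^ t

/-- The modified Hausdorff content `Ĥ^t_∞(E) = sup_{s > t} H^s_∞(E)`. -/
noncomputable def hContentHat {A : Type*} [MetricSpace A] (t : ℝ) (E : Set A) : ℝ≥0∞ :=
  ⨆ (s : ℝ) (_ : t < s), hContent s E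

/-- A measure `μ` is `D`-Ahlfors regular with constant `cA ≥ 1` if
`cA⁻¹ r^D ≤ μ(B(x,r)) ≤ cA r^D` for all `x` and `0 < r < diam A`. -/
def IsAhlfors {A : Type*} [MetricSpace A] [MeasurableSpace A]
    (μ : Measure A) (D cA : ℝ) : Prop :=
  1 ≤ cA ∧ ∀ (x : A) (r : ℝ), 0 < r → r < Metric.diam (Set.univ : Set A) →
    ENNReal.ofReal (cA⁻¹ * r ^ D) ≤ μ (closedBall x r) ∧
      μ (closedBall x r) ≤ ENNReal.ofReal (cA * r ^ D)

/-- A dyadic decomposition of a metric space `A`: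
a countable collection `𝒟 = ⋃ n, W n` of subsets of `A` with constants
`A₀, B₀, C₀ ≥ 1` and `n₀ ∈ ℕ` with the standard properties. -/
structure DyadicDecomp (A : Type*) [MetricSpace A] where
  W : ℕ → Set (Set A)
  A0 : ℝ
  B0 : ℝ
  C0 : ℝ
  n0 : ℕ
  one_le_A0 : 1 ≤ A0
  one_le_B0 : 1 ≤ B0
  one_le_C0 : 1 ≤ C0
  finite : ∀ n, (W n).Finite
  covers : ∀ n, ⋃₀ W n = Set.univ
  diam_to_zero : ∀ ε : ℝ, 0 < ε → ∃ N : ℕ, ∀ n ≥ N, ∀ Q ∈ W n, Metric.diam Q ≤ ε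
  ball_in : ∀ n, ∀ Q ∈ W n, ∃ x ∈ Q,
    Metric.ball x (Metric.diam Q / A0) ⊆ Q ∧ Q ⊆ Metric.ball x (A0 * Metric.diam Q)
  nested : ∀ n ≥ n0, ∀ Q ∈ W n, ∃ Q' ∈ W (n - n0), Q ⊆ Q'
  overlap : ∀ (n l : ℕ), ∀ Q ∈ W n,
    (({Q' | Q' ∈ W (n + l) ∧ (Q' ∩ Q).Nonempty}).ncard : ℝ) ≤ B0 ^ l
  comparable : ∀ n, ∀ Q ∈ W n, ∀ Q' ∈ W (n + 1),
    C0⁻¹ * Metric.diam Q' ≤ Metric.diam Q ∧ Metric.diam Q ≤ C0 * Metric.diam Q'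

/-- Membership in a dyadic decomposition. -/
def DyadicDecomp.mem {A : Type*} [MetricSpace A] (𝒟 : DyadicDecomp A) (Q : Set A) : Prop :=
  ∃ n, Q ∈ 𝒟.W n

/-- The parent property: every set of positive diameter is contained in a member of the
decomposition of comparable diameter. -/
def DyadicDecomp.ParentProp {A : Type*} [MetricSpace A] (𝒟 : DyadicDecomp A) (c0 : ℝ) : Prop :=
  1 ≤ c0 ∧ ∀ E : Set A, 0 < Metric.diam E →
    ∃ Q, 𝒟.mem Q ∧ E ⊆ Q ∧ Metric.diam Q ≤ c0 * Metric.diam E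

/-- The class `𝒢_s` of `G_δ` sets with uniformly positive `s`-content density
on members of the dyadic decomposition. -/
def Gclass {A : Type*} [MetricSpace A] (𝒟 : DyadicDecomp A) (s : ℝ) : Set (Set A) :=
  {E | IsGδ E ∧ ∃ c : ℝ, 0 < c ∧ ∀ Q, 𝒟.mem Q →
    ENNReal.ofReal (c * Metric.diam Q ^ s) ≤ hContent s (E ∩ Q)}

/-- Distance between two subsets of a metric space. -/
noncomputable def setDist {A : Type*} [MetricSpace A] (S T : Set A) : ℝ :=
  (⨅ x ∈ S, EMetric.infEdist x T).toReal

/-- A set `F` is `t`-metrically dense if `Ĥ^t_∞(F ∩ U) = Ĥ^t_∞(U)` for every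
nonempty proper open set `U`. -/
def MetricallyDense {A : Type*} [MetricSpace A] (t : ℝ) (F : Set A) : Prop :=
  ∀ U : Set A, IsOpen U → U.Nonempty → U ≠ Set.univ →
    hContentHat t (F ∩ U) = hContentHat t U

end



/-! The Whitney cubes are the cubes `Q` of `𝒟` with a point `x` such that
`A' diam Q ≤ dist(x, Uᶜ) ≤ B' diam Q`; the second inequality bounds `dist(Q, Uᶜ)` and the first
one, via the triangle inequality, gives `(A' - 1) diam Q ≤ dist(Q, Uᶜ)`. Every `x ∈ U` lies in
such a cube, by comparability of consecutive generations. Only finitely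
many Whitney cubes contain a given `x ∈ U`, as they have diameter at least `dist(x, Uᶜ)/(B' + 1)`
and cubes become uniformly small. By Zorn's lemma a point-finite cover has an irreducible
subcover, in which every cube has a point covered by no other cube. -/

open Bornology

/-- At `x ∈ U`, the traces `S ∩ {Q ∈ G | x ∈ Q}` of the covers `S ∈ c` form a chain of
nonempty subsets of a finite set, so its least element lies in all of them. -/
lemma subset_sUnion_sInter_of_isChain {α : Type*} {G : Set (Set α)} {U : Set α}
    (hpf : ∀ x ∈ U, {Q | Q ∈ G ∧ x ∈ Q}.Finite) {c : Set (Set (Set α))}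
    (hcG : ∀ S ∈ c, S ⊆ G) (hcov : ∀ S ∈ c, U ⊆ ⋃₀ S)
    (hc : IsChain (· ⊆ ·) c) (hne : c.Nonempty) :
    U ⊆ ⋃₀ ⋂₀ c := by
  intro x hx
  set T := {Q | Q ∈ G ∧ x ∈ Q}
  have hfin : ((· ∩ T) '' c).Finite :=
    (hpf x hx).finite_subsets.subset (image_subset_iff.2 fun _ _ => inter_subset_right)
  obtain ⟨S₀, hS₀, hmin⟩ := Set.Finite.exists_minimalFor' (· ∩ T) c hfin hne
  obtain ⟨Q, hQS₀, hxQ⟩ := hcov S₀ hS₀ hx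
  have hQT : Q ∈ S₀ ∩ T := ⟨hQS₀, hcG S₀ hS₀ hQS₀, hxQ⟩
  refine ⟨Q, mem_sInter.2 fun S hS => ?_, hxQ⟩
  rcases hc.total hS hS₀ with h | h
  · exact (hmin hS (inter_subset_inter_left T h) hQT).1
  · exact h hQS₀

lemma exists_irreducible_subcover {α : Type*} {G : Set (Set α)} {U : Set α}
    (hcov : U ⊆ ⋃₀ G) (hpf : ∀ x ∈ U, {Q | Q ∈ G ∧ x ∈ Q}.Finite) :
    ∃ M ⊆ G, U ⊆ ⋃₀ M ∧ ∀ Q ∈ M, ∃ x ∈ Q, ∀ Q' ∈ M, x ∈ Q' → Q' = Q := by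
  obtain ⟨M, -, hM⟩ := zorn_superset_nonempty {S | S ⊆ G ∧ U ⊆ ⋃₀ S}
    (fun c hc hchain hne => ⟨⋂₀ c,
      ⟨(sInter_subset_of_mem hne.some_mem).trans (hc hne.some_mem).1,
        subset_sUnion_sInter_of_isChain hpf (fun S hS => (hc hS).1) (fun S hS => (hc hS).2)
          hchain hne⟩,
      fun _ => sInter_subset_of_mem⟩) G ⟨subset_rfl, hcov⟩
  obtain ⟨hMG, hMU⟩ := hM.prop
  refine ⟨M, hMG, hMU, fun Q hQ => ?_⟩
  by_contra! hshared
  have hcov' : U ⊆ ⋃₀ (M \ {Q}) := by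
    intro x hx
    obtain ⟨Q', hQ', hxQ'⟩ := hMU hx
    by_cases hQ'Q : Q' = Q
    · obtain ⟨Q'', hQ'', hxQ'', hne⟩ := hshared x (hQ'Q ▸ hxQ')
      exact ⟨Q'', ⟨hQ'', hne⟩, hxQ''⟩
    · exact ⟨Q', ⟨hQ', hQ'Q⟩, hxQ'⟩
  exact (hM.le_of_le ⟨sdiff_subset.trans hMG, hcov'⟩ sdiff_subset hQ).2 rfl

section setDist

variable {A : Type*} [MetricSpace A] {S T : Set A}

lemma setDist_le_infDist (hT : T.Nonempty) {y : A} (hy : y ∈ S) :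
    setDist S T ≤ infDist y T :=
  ENNReal.toReal_mono (Metric.infEDist_ne_top hT) (iInf₂_le y hy)

lemma le_setDist (hS : S.Nonempty) (hT : T.Nonempty) {r : ℝ}
    (h : ∀ x ∈ S, r ≤ infDist x T) : r ≤ setDist S T := by
  obtain ⟨y, hy⟩ := hS
  have hfin : (⨅ x ∈ S, infEDist x T) ≠ ⊤ :=
    ne_top_of_le_ne_top (Metric.infEDist_ne_top hT) (iInf₂_le y hy)
  exact (ENNReal.ofReal_le_iff_le_toReal hfin).1
    (le_iInf₂ fun x hx => ENNReal.ofReal_le_of_le_toReal (h x hx))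

end setDist

def IsWhitneySet {A : Type*} [MetricSpace A] (F : Set A) (a b : ℝ) (Q : Set A) : Prop :=
  ∃ x ∈ Q, a * diam Q ≤ infDist x F ∧ infDist x F ≤ b * diam Q

namespace IsWhitneySet

variable {A : Type*} [MetricSpace A] {F Q : Set A} {a b : ℝ}

lemma disjoint (h : IsWhitneySet F a b Q) (ha : 1 < a) (hQ : IsBounded Q) (hdiam : 0 < diam Q) :
    Disjoint Q F := by
  obtain ⟨x, hxQ, hlow, -⟩ := h
  refine disjoint_left.2 fun q hqQ hqF => ?_
  have : infDist x F ≤ diam Q :=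
    (infDist_le_dist_of_mem hqF).trans (dist_le_diam_of_mem hQ hxQ hqQ)
  nlinarith

lemma sub_one_mul_diam_le_setDist (h : IsWhitneySet F a b Q) (hQ : IsBounded Q)
    (hF : F.Nonempty) : (a - 1) * diam Q ≤ setDist Q F := by
  obtain ⟨x, hxQ, hlow, -⟩ := h
  refine le_setDist ⟨x, hxQ⟩ hF fun q hq => ?_
  have := infDist_le_infDist_add_dist (x := x) (y := q) (s := F)
  have := dist_le_diam_of_mem hQ hxQ hq
  linarith

lemma setDist_le (h : IsWhitneySet F a b Q) (hF : F.Nonempty) : setDist Q F ≤ b * diam Q := by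
  obtain ⟨x, hxQ, -, hup⟩ := h
  exact (setDist_le_infDist hF hxQ).trans hup

end IsWhitneySet

namespace DyadicDecomp

variable {A : Type*} [MetricSpace A] (𝒟 : DyadicDecomp A)

lemma exists_mem_W (n : ℕ) (x : A) : ∃ Q ∈ 𝒟.W n, x ∈ Q :=
  mem_sUnion.1 (𝒟.covers n ▸ mem_univ x)

lemma diam_pos {n : ℕ} {Q : Set A} (hQ : Q ∈ 𝒟.W n) : 0 < diam Q := by
  obtain ⟨x, hxQ, -, hQball⟩ := 𝒟.ball_in n Q hQ
  have := mem_ball.1 (hQball hxQ)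
  rw [dist_self] at this
  exact pos_of_mul_pos_right this (zero_le_one.trans 𝒟.one_le_A0)

lemma isBounded {n : ℕ} {Q : Set A} (hQ : Q ∈ 𝒟.W n) : IsBounded Q := by
  obtain ⟨x, -, -, hQball⟩ := 𝒟.ball_in n Q hQ
  exact isBounded_ball.subset hQball

lemma isBounded_univ (𝒟 : DyadicDecomp A) : IsBounded (univ : Set A) := by
  rw [← 𝒟.covers 0, isBounded_sUnion (𝒟.finite 0)]
  exact fun Q hQ => 𝒟.isBounded hQ

lemma exists_pos_le_diam_of_mem_W_zero : ∃ δ > 0, ∀ Q ∈ 𝒟.W 0, δ ≤ diam Q := by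
  rcases (𝒟.W 0).eq_empty_or_nonempty with h | h
  · exact ⟨1, one_pos, by simp [h]⟩
  · obtain ⟨Q₀, hQ₀, hmin⟩ := exists_min_image (𝒟.W 0) diam (𝒟.finite 0) h
    exact ⟨diam Q₀, 𝒟.diam_pos hQ₀, hmin⟩

lemma finite_setOf_le_diam {ε : ℝ} (hε : 0 < ε) : {Q | 𝒟.mem Q ∧ ε ≤ diam Q}.Finite := by
  obtain ⟨N, hN⟩ := 𝒟.diam_to_zero (ε / 2) (half_pos hε)
  refine ((finite_Iio N).biUnion fun n _ => 𝒟.finite n).subset ?_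
  rintro Q ⟨⟨n, hQ⟩, hεQ⟩
  refine mem_biUnion (mem_Iio.2 (not_le.1 fun hn => ?_)) hQ
  linarith [hN n hn Q hQ]

/-- Take the first generation `n` with a cube around `x` of diameter at most `d / a`, where
`d = infDist x F`. A cube of generation `n - 1` around `x` is too large, so comparability of
consecutive generations gives `d ≤ a C₀ diam Q`; for `n = 0` use `d ≤ diam A ≤ B δ`. -/
lemma exists_isWhitneySet {F : Set A} {a B δ : ℝ} (ha : 0 < a)
    (hδW : ∀ Q ∈ 𝒟.W 0, δ ≤ diam Q) (haB : a * 𝒟.C0 ≤ B) (hδB : diam (univ : Set A) ≤ B * δ)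
    {x : A} (hx : 0 < infDist x F) : ∃ Q, 𝒟.mem Q ∧ x ∈ Q ∧ IsWhitneySet F a B Q := by
  classical
  set d := infDist x F
  have hsmall : ∃ n, ∃ Q ∈ 𝒟.W n, x ∈ Q ∧ a * diam Q ≤ d := by
    obtain ⟨N, hN⟩ := 𝒟.diam_to_zero (d / a) (div_pos hx ha)
    obtain ⟨Q, hQ, hxQ⟩ := 𝒟.exists_mem_W N x
    exact ⟨N, Q, hQ, hxQ, (le_div_iff₀' ha).1 (hN N le_rfl Q hQ)⟩
  obtain ⟨Q, hQ, hxQ, hlow⟩ := Nat.find_spec hsmall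
  refine ⟨Q, ⟨_, hQ⟩, hxQ, x, hxQ, hlow, ?_⟩
  have hB : 0 ≤ B := (mul_nonneg ha.le (zero_le_one.trans 𝒟.one_le_C0)).trans haB
  rcases hn : Nat.find hsmall with _ | m
  · obtain ⟨z, hz⟩ : F.Nonempty := nonempty_iff_ne_empty.2 fun hF => by simp [d, hF] at hx
    calc d ≤ dist x z := infDist_le_dist_of_mem hz
      _ ≤ diam (univ : Set A) := dist_le_diam_of_mem 𝒟.isBounded_univ trivial trivial
      _ ≤ B * δ := hδB
      _ ≤ B * diam Q := mul_le_mul_of_nonneg_left (hδW Q (hn ▸ hQ)) hB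
  · obtain ⟨Q', hQ', hxQ'⟩ := 𝒟.exists_mem_W m x
    have hlarge : d < a * diam Q' :=
      not_le.1 fun h => Nat.find_min hsmall (hn ▸ m.lt_succ_self) ⟨Q', hQ', hxQ', h⟩
    calc d ≤ a * diam Q' := hlarge.le
      _ ≤ a * (𝒟.C0 * diam Q) :=
        mul_le_mul_of_nonneg_left (𝒟.comparable m Q' hQ' Q (hn ▸ hQ)).2 ha.le
      _ = a * 𝒟.C0 * diam Q := (mul_assoc _ _ _).symm
      _ ≤ B * diam Q := mul_le_mul_of_nonneg_right haB diam_nonneg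

lemma finite_setOf_isWhitneySet {F : Set A} {a b : ℝ} (hb : 0 ≤ b) {x : A}
    (hx : 0 < infDist x F) : {Q | (𝒟.mem Q ∧ IsWhitneySet F a b Q) ∧ x ∈ Q}.Finite := by
  refine (𝒟.finite_setOf_le_diam (div_pos hx (by linarith : (0 : ℝ) < b + 1))).subset ?_
  rintro Q ⟨⟨⟨n, hQ⟩, y, hyQ, -, hup⟩, hxQ⟩
  refine ⟨⟨n, hQ⟩, (div_le_iff₀ (by linarith)).2 ?_⟩
  have := infDist_le_infDist_add_dist (x := x) (y := y) (s := F)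
  have := dist_le_diam_of_mem (𝒟.isBounded hQ) hxQ hyQ
  linarith

end DyadicDecomp

theorem exists_whitney_decomposition_general {A : Type*} [MetricSpace A]
    (𝒟 : DyadicDecomp A) :
    ∀ A' : ℝ, 10 < A' → ∃ B' : ℝ, 1 ≤ B' ∧
      ∀ U : Set A, IsOpen U → U.Nonempty → U ≠ Set.univ →
        ∃ 𝒲 : Set (Set A), (∀ Q ∈ 𝒲, 𝒟.mem Q) ∧
          U = ⋃₀ 𝒲 ∧
          (∀ Q ∈ 𝒲, Metric.diam Q ≤ (1 / (A' - 1)) * setDist Q Uᶜ ∧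
            setDist Q Uᶜ ≤ B' * Metric.diam Q) ∧
          (∀ Q ∈ 𝒲, ∃ x ∈ Q, ∀ Q' ∈ 𝒲, x ∈ Q' → Q' = Q) := by
  intro A' hA'
  obtain ⟨δ, hδ, hδW⟩ := 𝒟.exists_pos_le_diam_of_mem_W_zero
  set B' := max 1 (max (A' * 𝒟.C0) (diam (univ : Set A) / δ))
  have haB : A' * 𝒟.C0 ≤ B' := (le_max_left _ _).trans (le_max_right _ _)
  have hδB : diam (univ : Set A) ≤ B' * δ :=
    (div_le_iff₀ hδ).1 ((le_max_right _ _).trans (le_max_right _ _))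
  refine ⟨B', le_max_left _ _, fun U hU _ hUuniv => ?_⟩
  have hUc : Uᶜ.Nonempty := nonempty_compl.2 hUuniv
  have hdist : ∀ x ∈ U, 0 < infDist x Uᶜ := fun x hx =>
    (hU.isClosed_compl.notMem_iff_infDist_pos hUc).1 (not_not.2 hx)
  obtain ⟨𝒲, h𝒲, hU𝒲, hprivate⟩ :=
    exists_irreducible_subcover (G := {Q | 𝒟.mem Q ∧ IsWhitneySet Uᶜ A' B' Q}) (U := U)
      (fun x hx => by
        obtain ⟨Q, hQ, hxQ, hW⟩ :=
          𝒟.exists_isWhitneySet (by linarith) hδW haB hδB (hdist x hx)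
        exact ⟨Q, ⟨hQ, hW⟩, hxQ⟩)
      (fun x hx => 𝒟.finite_setOf_isWhitneySet (zero_le_one.trans (le_max_left _ _)) (hdist x hx))
  have hsub : ∀ Q ∈ 𝒲, Q ⊆ U := fun Q hQ => by
    obtain ⟨⟨n, hQn⟩, hW⟩ := h𝒲 hQ
    simpa using (hW.disjoint (by linarith) (𝒟.isBounded hQn) (𝒟.diam_pos hQn)).subset_compl_right
  refine ⟨𝒲, fun Q hQ => (h𝒲 hQ).1, hU𝒲.antisymm (sUnion_subset hsub), fun Q hQ => ?_, hprivate⟩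
  obtain ⟨⟨n, hQn⟩, hW⟩ := h𝒲 hQ
  refine ⟨?_, hW.setDist_le hUc⟩
  rw [one_div, inv_mul_eq_div, le_div_iff₀ (by linarith)]
  linarith [hW.sub_one_mul_diam_le_setDist (𝒟.isBounded hQn) hUc]

/-- Whitney decomposition: in a bounded metric space with a dyadic decomposition, every
nonempty proper open set admits an `A'`-Whitney decomposition, with comparison constant `B'`
depending only on `A'` and the decomposition constants. -/
theorem exists_whitney_decomposition {A : Type*} [MetricSpace A]
    (hbdd : Bornology.IsBounded (Set.univ : Set A)) (𝒟 : DyadicDecomp A) :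
    ∀ A' : ℝ, 10 < A' → ∃ B' : ℝ, 1 ≤ B' ∧
      ∀ U : Set A, IsOpen U → U.Nonempty → U ≠ Set.univ →
        ∃ 𝒲 : Set (Set A), (∀ Q ∈ 𝒲, 𝒟.mem Q) ∧
          U = ⋃₀ 𝒲 ∧
          (∀ Q ∈ 𝒲, Metric.diam Q ≤ (1 / (A' - 1)) * setDist Q Uᶜ ∧
            setDist Q Uᶜ ≤ B' * Metric.diam Q) ∧
          (∀ Q ∈ 𝒲, ∃ x ∈ Q, ∀ Q' ∈ 𝒲, x ∈ Q' → Q' = Q) :=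
  exists_whitney_decomposition_general 𝒟
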